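/- Let f, g ∈ ℤ̂[[t^ℤ̂]]. If for every n ≥ 1 the image of g in ℤ̂[t]/(tⁿ−1) lies in the ideal generated by the image of f, then g lies in the principal ideal (f) of ℤ̂[[t^ℤ̂]]; equivalently, the natural map from the ideal (f) to the inverse limit lim_n (f mod (tⁿ−1))·(ℤ̂[t]/(tⁿ−1)) is an isomorphism. -/

import Mathlib

open Polynomial

set_option synthInstance.maxHeartbeats 1000000
set_option maxHeartbeats 1000000

noncomputable section
noncomputable section

/-- The ring of profinite integers `ẐZ = lim_n ℤ/nℤ`, realized as the subring of
`∏ n : ℕ+, ZMod n` consisting of families compatible under the natural projections. -/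
def ZHatSubring : Subring (∀ n : ℕ+, ZMod n) where
  carrier := {f | ∀ (m n : ℕ+) (h : (m : ℕ) ∣ (n : ℕ)), ZMod.castHom h (ZMod m) (f n) = f m}
  mul_mem' := fun {a b} ha hb m n h => by
    simp only [Pi.mul_apply, map_mul, ha m n h, hb m n h]
  one_mem' := fun m n h => map_one _
  add_mem' := fun {a b} ha hb m n h => by
    simp only [Pi.add_apply, map_add, ha m n h, hb m n h]
  zero_mem' := fun m n h => map_zero _
  neg_mem' := fun {a} ha m n h => by
    simp only [Pi.neg_apply, map_neg, ha m n h]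

/-- The profinite integers as a type. -/
abbrev ZHat : Type := ZHatSubring

instance : CommRing ZHat := inferInstance

/-- The quotient ring `R[t]/(tⁿ - 1)`. -/
abbrev CycModN (R : Type) [CommRing R] (n : ℕ+) : Type :=
  Polynomial R ⧸ Ideal.span {(X : Polynomial R) ^ (n : ℕ) - 1}

lemma X_pow_sub_one_dvd {R : Type} [CommRing R] {m n : ℕ} (h : m ∣ n) :
    (X : Polynomial R) ^ m - 1 ∣ (X : Polynomial R) ^ n - 1 := by
  obtain ⟨k, rfl⟩ := h
  simpa [pow_mul] using sub_dvd_pow_sub_pow ((X : Polynomial R) ^ m) 1 k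

/-- The natural transition map `R[t]/(tⁿ-1) → R[t]/(tᵐ-1)` for `m ∣ n`. -/
def cycTransition (R : Type) [CommRing R] {m n : ℕ+} (h : (m : ℕ) ∣ (n : ℕ)) :
    CycModN R n →+* CycModN R m :=
  Ideal.Quotient.factor
    (Ideal.span_singleton_le_span_singleton.mpr (X_pow_sub_one_dvd h))

/-- The completed group ring `R[[t^Ẑ]] = lim_n R[t]/(tⁿ-1)`, realized as the subring of
`∏ n : ℕ+, R[t]/(tⁿ-1)` of families compatible under the transition maps. -/
def CompletedCycRing (R : Type) [CommRing R] : Subring (∀ n : ℕ+, CycModN R n) where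
  carrier := {f | ∀ (m n : ℕ+) (h : (m : ℕ) ∣ (n : ℕ)), cycTransition R h (f n) = f m}
  mul_mem' := fun {a b} ha hb m n h => by
    simp only [Pi.mul_apply, map_mul, ha m n h, hb m n h]
  one_mem' := fun m n h => map_one _
  add_mem' := fun {a b} ha hb m n h => by
    simp only [Pi.add_apply, map_add, ha m n h, hb m n h]
  zero_mem' := fun m n h => map_zero _
  neg_mem' := fun {a} ha m n h => by
    simp only [Pi.neg_apply, map_neg, ha m n h]

instance completedCycRingCommRing (R : Type) [CommRing R] :
    CommRing (CompletedCycRing R) := inferInstance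

/-- The natural ring homomorphism `R[t] → R[[t^Ẑ]]`, `f ↦ (f mod (tⁿ-1))ₙ`. -/
def polyToCompleted (R : Type) [CommRing R] : Polynomial R →+* CompletedCycRing R :=
  RingHom.codRestrict (Pi.ringHom fun n => Ideal.Quotient.mk _) _
    (fun f m n h => by
      (simp [cycTransition, Pi.ringHom_apply]) <;> rfl)

/-- The natural ring homomorphism `ℤ[t] → R[[t^Ẑ]]`. -/
def intPolyEmb (R : Type) [CommRing R] : Polynomial ℤ →+* CompletedCycRing R :=
  (polyToCompleted R).comp (Polynomial.mapRingHom (Int.castRingHom R))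


/-!
`Ẑ[[t^Ẑ]]` is the inverse limit of the finite rings `(ℤ/k!)[t]/(t^{k!} - 1)`: an element of
`Ẑ[t]/(tⁿ - 1)` is its representative of degree `< n`, whose coefficients in `Ẑ` are read off
from their reductions modulo every `m`. At each of these finite levels the solutions `q` of
`q * f = g` form a finite set, nonempty by hypothesis, and reduction carries solutions to
solutions. By Kőnig's lemma some family of solutions is compatible, and it glues to an element
`q` of `Ẑ[[t^Ẑ]]` with `q * f = g`.
-/

open CategoryTheory

theorem mem_span_singleton_of_finite_inverse_limit {L : Type*} [CommRing L] {A : ℕ → Type*}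
    [∀ k, CommRing (A k)] [∀ k, Finite (A k)]
    (π : ∀ k, A (k + 1) →+* A k) (p : ∀ k, L →+* A k) (hπp : ∀ k x, π k (p (k + 1) x) = p k x)
    (hinj : ∀ x, (∀ k, p k x = 0) → x = 0)
    (hsurj : ∀ a : ∀ k, A k, (∀ k, π k (a (k + 1)) = a k) → ∃ x, ∀ k, p k x = a k)
    {f g : L} (h : ∀ k, p k g ∈ Ideal.span {p k f}) : g ∈ Ideal.span {f} := by
  let F : ℕᵒᵖ ⥤ Type _ := Functor.ofOpSequence (X := fun k => {q : A k // q * p k f = p k g})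
    fun k => TypeCat.ofHom fun q => ⟨π k q.1, by rw [← hπp k f, ← hπp k g, ← map_mul, q.2]⟩
  have (k : ℕᵒᵖ) : Nonempty (F.obj k) :=
    let ⟨q, hq⟩ := Ideal.mem_span_singleton'.mp (h k.unop)
    ⟨⟨q, hq⟩⟩
  have (k : ℕᵒᵖ) : Finite (F.obj k) := Subtype.finite
  obtain ⟨s, hs⟩ := nonempty_sections_of_finite_inverse_system F
  obtain ⟨q, hq⟩ := hsurj (fun k => (s (.op k)).1) fun k => by
    have := hs (homOfLE (Nat.le_add_right k 1)).op
    rw [Functor.ofOpSequence_map_homOfLE_succ] at this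
    exact congrArg Subtype.val this
  rw [Ideal.mem_span_singleton']
  refine ⟨q, sub_eq_zero.mp (hinj _ fun k => ?_)⟩
  rw [map_sub, map_mul, hq, (s (.op k)).2, sub_self]

namespace ZHat

def proj (m : ℕ+) : ZHat →+* ZMod m :=
  (Pi.evalRingHom (fun n : ℕ+ => ZMod n) m).comp ZHatSubring.subtype

lemma castHom_comp_proj {m m' : ℕ+} (h : (m : ℕ) ∣ m') :
    (ZMod.castHom h (ZMod m)).comp (proj m') = proj m :=
  RingHom.ext fun z => z.2 m m' h

lemma ext {z w : ZHat} (h : ∀ m, proj m z = proj m w) : z = w :=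
  Subtype.ext (funext h)

end ZHat

namespace CycModN

variable {R S T : Type} [CommRing R] [CommRing S] [CommRing T]

lemma monic_X_pow_sub_one (R : Type) [CommRing R] (n : ℕ+) :
    ((X : R[X]) ^ (n : ℕ) - 1).Monic := by
  simpa using monic_X_pow_sub_C (1 : R) n.ne_zero

def map (φ : R →+* S) {n n' : ℕ+} (h : (n : ℕ) ∣ n') : CycModN R n' →+* CycModN S n :=
  Ideal.quotientMap _ (mapRingHom φ) <| Ideal.span_le.mpr <| by
    rintro _ rfl
    simpa [Ideal.mem_span_singleton] using X_pow_sub_one_dvd h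

@[simp]
lemma map_mk (φ : R →+* S) {n n' : ℕ+} (h : (n : ℕ) ∣ n') (p : R[X]) :
    map φ h (Ideal.Quotient.mk _ p) = Ideal.Quotient.mk _ (p.map φ) :=
  Ideal.quotientMap_mk

lemma map_map (φ : S →+* T) (ψ : R →+* S) {n n' n'' : ℕ+} (h : (n : ℕ) ∣ n')
    (h' : (n' : ℕ) ∣ n'') (x : CycModN R n'') :
    map φ h (map ψ h' x) = map (φ.comp ψ) (h.trans h') x := by
  obtain ⟨p, rfl⟩ := Ideal.Quotient.mk_surjective x
  simp [Polynomial.map_map]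

lemma map_id {n : ℕ+} (x : CycModN R n) : map (RingHom.id R) dvd_rfl x = x := by
  obtain ⟨p, rfl⟩ := Ideal.Quotient.mk_surjective x
  simp

lemma cycTransition_eq_map {n n' : ℕ+} (h : (n : ℕ) ∣ n') :
    cycTransition R h = map (RingHom.id R) h :=
  Ideal.Quotient.ringHom_ext <| RingHom.ext fun p => by simp [cycTransition]

lemma map_cycTransition (φ : R →+* S) {n n' : ℕ+} (h : (n : ℕ) ∣ n') (x : CycModN R n') :
    map φ dvd_rfl (cycTransition R h x) = map (RingHom.id S) h (map φ dvd_rfl x) := by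
  rw [cycTransition_eq_map, map_map, map_map, RingHom.comp_id, RingHom.id_comp]

def rep {n : ℕ+} (x : CycModN R n) : R[X] :=
  AdjoinRoot.modByMonicHom (monic_X_pow_sub_one R n) x

lemma rep_mk {n : ℕ+} (p : R[X]) :
    rep (Ideal.Quotient.mk _ p : CycModN R n) = p %ₘ (X ^ (n : ℕ) - 1) :=
  AdjoinRoot.modByMonicHom_mk _ p

lemma mk_rep {n : ℕ+} (x : CycModN R n) : Ideal.Quotient.mk _ (rep x) = x :=
  AdjoinRoot.mk_leftInverse (monic_X_pow_sub_one R n) x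

lemma coeff_rep_of_le {n : ℕ+} (x : CycModN R n) {i : ℕ} (hi : (n : ℕ) ≤ i) :
    (rep x).coeff i = 0 := by
  nontriviality R
  obtain ⟨p, rfl⟩ := Ideal.Quotient.mk_surjective x
  refine coeff_eq_zero_of_degree_lt
    ((degree_modByMonic_lt _ (monic_X_pow_sub_one R n)).trans_le ?_)
  simpa using (degree_X_pow_sub_C n.pos (1 : R)).trans_le (Nat.cast_le.mpr hi)

lemma rep_map (φ : R →+* S) {n : ℕ+} (x : CycModN R n) :
    rep (map φ dvd_rfl x) = (rep x).map φ := by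
  obtain ⟨p, rfl⟩ := Ideal.Quotient.mk_surjective x
  rw [map_mk, rep_mk, rep_mk, map_modByMonic φ (monic_X_pow_sub_one R n)]
  simp

instance {n : ℕ+} [Finite R] : Finite (CycModN R n) :=
  have := (monic_X_pow_sub_one R n).finite_quotient
  Module.finite_of_finite R

lemma eq_of_forall_map_proj_eq {n : ℕ+} {x y : CycModN ZHat n}
    (h : ∀ m, map (ZHat.proj m) dvd_rfl x = map (ZHat.proj m) dvd_rfl y) : x = y := by
  rw [← mk_rep x, ← mk_rep y]
  refine congrArg _ (Polynomial.ext fun i => ZHat.ext fun m => ?_)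
  simpa [rep_map] using congrArg (fun z => (rep z).coeff i) (h m)

lemma exists_map_proj_eq {n : ℕ+} (a : ∀ m : ℕ+, CycModN (ZMod m) n)
    (ha : ∀ (m m' : ℕ+) (h : (m : ℕ) ∣ m'), map (ZMod.castHom h (ZMod m)) dvd_rfl (a m') = a m) :
    ∃ x : CycModN ZHat n, ∀ m, map (ZHat.proj m) dvd_rfl x = a m := by
  let c (i : ℕ) : ZHat := ⟨fun m => (rep (a m)).coeff i, fun m m' h => by
    simp only [← ha m m' h, rep_map, coeff_map]⟩
  refine ⟨Ideal.Quotient.mk _ (∑ i ∈ Finset.range n, monomial i (c i)), fun m => ?_⟩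
  rw [map_mk, ← mk_rep (a m)]
  refine congrArg _ (Polynomial.ext fun i => ?_)
  simp only [Polynomial.map_sum, map_monomial, finsetSum_coeff, coeff_monomial,
    Finset.sum_ite_eq', Finset.mem_range]
  split_ifs with hi
  · rfl
  · exact (coeff_rep_of_le _ (not_lt.mp hi)).symm

end CycModN

namespace CompletedCycRing

open CycModN

def level (k : ℕ) : ℕ+ := ⟨k.factorial, k.factorial_pos⟩

lemma level_dvd_level {k k' : ℕ} (h : k ≤ k') : (level k : ℕ) ∣ level k' :=
  Nat.factorial_dvd_factorial h

lemma dvd_level (n : ℕ+) : (n : ℕ) ∣ level n :=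
  Nat.dvd_factorial n.pos le_rfl

lemma dvd_level_max_left (n m : ℕ+) : (n : ℕ) ∣ level (max n m) :=
  (dvd_level n).trans (level_dvd_level le_sup_left)

lemma dvd_level_max_right (n m : ℕ+) : (m : ℕ) ∣ level (max n m) :=
  (dvd_level m).trans (level_dvd_level le_sup_right)

def reduce (n m : ℕ+) : CompletedCycRing ZHat →+* CycModN (ZMod m) n :=
  (map (ZHat.proj m) dvd_rfl).comp
    ((Pi.evalRingHom _ n).comp (CompletedCycRing ZHat).subtype)

def levelMap {k k' : ℕ} (h : k ≤ k') :
    CycModN (ZMod (level k')) (level k') →+* CycModN (ZMod (level k)) (level k) :=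
  map (ZMod.castHom (level_dvd_level h) _) (level_dvd_level h)

lemma reduce_apply (n m : ℕ+) (x : CompletedCycRing ZHat) :
    reduce n m x = map (ZHat.proj m) dvd_rfl (x.1 n) :=
  rfl

lemma map_castHom_reduce {n n' m m' : ℕ+} (hn : (n : ℕ) ∣ n') (hm : (m : ℕ) ∣ m')
    (x : CompletedCycRing ZHat) :
    map (ZMod.castHom hm (ZMod m)) hn (reduce n' m' x) = reduce n m x := by
  have hx : cycTransition ZHat hn (x.1 n') = x.1 n := x.2 n n' hn
  rw [reduce_apply, reduce_apply, ← hx, cycTransition_eq_map, CycModN.map_map, CycModN.map_map,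
    ZHat.castHom_comp_proj, RingHom.comp_id]

lemma eq_zero_of_forall_reduce_level_eq_zero {x : CompletedCycRing ZHat}
    (hx : ∀ k, reduce (level k) (level k) x = 0) : x = 0 := by
  refine Subtype.ext (funext fun n => eq_of_forall_map_proj_eq fun m => ?_)
  have := map_castHom_reduce (dvd_level_max_left n m) (dvd_level_max_right n m) x
  rw [hx, map_zero] at this
  simpa [reduce_apply] using this.symm

section Reconstruction

variable {a : ∀ k, CycModN (ZMod (level k)) (level k)}

lemma levelMap_eq_of_succ (ha : ∀ k, levelMap k.le_succ (a (k + 1)) = a k) {k k' : ℕ}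
    (h : k ≤ k') : levelMap h (a k') = a k := by
  induction h with
  | refl => simpa [levelMap] using map_id (a k)
  | @step j h ih =>
    rw [← ih, ← ha j, levelMap, levelMap, levelMap, CycModN.map_map, ZMod.castHom_comp]

lemma map_castHom_eq (ha : ∀ k, levelMap k.le_succ (a (k + 1)) = a k) {n m : ℕ+} {k k' : ℕ}
    (hn : (n : ℕ) ∣ level k) (hm : (m : ℕ) ∣ level k)
    (hn' : (n : ℕ) ∣ level k') (hm' : (m : ℕ) ∣ level k') :
    map (ZMod.castHom hm (ZMod m)) hn (a k) = map (ZMod.castHom hm' (ZMod m)) hn' (a k') := by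
  rw [← levelMap_eq_of_succ ha (le_max_left k k'), ← levelMap_eq_of_succ ha (le_max_right k k'),
    levelMap, levelMap, CycModN.map_map, CycModN.map_map, ZMod.castHom_comp, ZMod.castHom_comp]

lemma exists_reduce_level_eq (ha : ∀ k, levelMap k.le_succ (a (k + 1)) = a k) :
    ∃ x : CompletedCycRing ZHat, ∀ k, reduce (level k) (level k) x = a k := by
  have hcomp (n : ℕ+) := exists_map_proj_eq
    (fun m => map (ZMod.castHom (dvd_level_max_right n m) _) (dvd_level_max_left n m)
      (a (max n m)))
    fun m m' h => by rw [CycModN.map_map, ZMod.castHom_comp]; exact map_castHom_eq ha _ _ _ _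
  choose x hx using hcomp
  refine ⟨⟨x, fun n n' h => eq_of_forall_map_proj_eq fun m => ?_⟩, fun k => ?_⟩
  · rw [map_cycTransition, hx, hx, CycModN.map_map, RingHom.id_comp]
    exact map_castHom_eq ha _ _ _ _
  · rw [reduce_apply]
    change map (ZHat.proj (level k)) dvd_rfl (x (level k)) = a k
    rw [hx, map_castHom_eq ha _ _ (level_dvd_level le_rfl) (level_dvd_level le_rfl)]
    exact levelMap_eq_of_succ ha le_rfl

end Reconstruction

end CompletedCycRing

open CompletedCycRing in
/-- If `f, g ∈ Ẑ[[t^Ẑ]]` and for every `n ≥ 1` the image of `g` in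
`Ẑ[t]/(tⁿ-1)` lies in the ideal generated by the image of `f`, then `g ∈ (f)`. -/
theorem mem_span_of_forall_component_mem_span
    (f g : CompletedCycRing ZHat)
    (h : ∀ n : ℕ+, (g : ∀ n : ℕ+, CycModN ZHat n) n ∈
      Ideal.span {(f : ∀ n : ℕ+, CycModN ZHat n) n}) :
    g ∈ Ideal.span ({f} : Set (CompletedCycRing ZHat)) := by
  refine mem_span_singleton_of_finite_inverse_limit
    (fun k => levelMap k.le_succ) (fun k => reduce (level k) (level k))
    (fun _ => map_castHom_reduce _ _)
    (fun _ => eq_zero_of_forall_reduce_level_eq_zero) (fun _ => exists_reduce_level_eq)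
    fun k => ?_
  obtain ⟨q, hq⟩ := Ideal.mem_span_singleton'.mp (h (level k))
  exact Ideal.mem_span_singleton'.mpr
    ⟨CycModN.map (ZHat.proj _) dvd_rfl q, by rw [reduce_apply, reduce_apply, ← hq, map_mul]⟩
end
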